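/- arXiv:0707.3241 — 3 statements merged into one kernel-verified Lean document; each statement's English description precedes it below -/
import Mathlib

section
/- If every vertex in the exterior boundary ∂⁺U of a set U of vertices in a graph G is (c,α,ε)-good, then for every v ∈ U and every λ ≤ α², the block boundary weight satisfies ψ_λ(v) = ∑_{w ∈ ∂⁺U} λ^{d(w,v)} ≤ ε·λ/α². -/
/-!
Fix a boundary vertex `w₀` closest to `v`. Since `λ ≤ α²`, each term `λ^{d(w,v)}` is at most
`(λ/α²)·(α²)^{d(w,v)}`, so it suffices to bound `∑_{w ∈ ∂⁺U} α^{2 d(w,v)}` by `φ_α(w₀) ≤ ε`.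
By minimality of `w₀` and the triangle inequality, `d(w₀,w) ≤ 2 d(w,v)` for every boundary
vertex `w`, so `α^{2 d(w,v)} ≤ α^{d(w₀,w)}`; the term of `w₀` itself is charged to `v`, which
lies in `U` and hence not on the boundary.
-/

open Finset

theorem pow_le_div_mul_pow {K : Type*} [Field K] [LinearOrder K] [IsStrictOrderedRing K]
    {a b : K} (ha : 0 ≤ a) (hab : a ≤ b) (hb : 0 < b) {n : ℕ} (hn : n ≠ 0) :
    a ^ n ≤ a / b * b ^ n := by
  obtain ⟨k, rfl⟩ := Nat.exists_eq_succ_of_ne_zero hn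
  calc a ^ (k + 1) = a ^ k * a := pow_succ a k
    _ ≤ b ^ k * a := by gcongr
    _ = a / b * b ^ (k + 1) := by field_simp; ring

namespace SimpleGraph

variable {V : Type*} {G : SimpleGraph V}

theorem Connected.dist_le_two_mul_of_dist_le (hG : G.Connected) {u v w : V}
    (h : G.dist u v ≤ G.dist w v) : G.dist u w ≤ 2 * G.dist w v := by
  have := hG.dist_triangle (u := u) (v := v) (w := w)
  rw [dist_comm (u := v)] at this
  omega

variable [Fintype V] [DecidableEq V]

variable (G) in
noncomputable def alphaWeight (α : ℝ) (v : V) : ℝ :=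
  ∑ u ∈ univ.filter (· ≠ v), α ^ G.dist v u

theorem Connected.sum_sq_pow_dist_le_alphaWeight (hG : G.Connected) {α : ℝ} (hα0 : 0 ≤ α)
    (hα1 : α ≤ 1) {s : Finset V} {v w₀ : V} (hv : v ∉ s) (hw₀ : w₀ ∈ s)
    (hmin : ∀ w ∈ s, G.dist w₀ v ≤ G.dist w v) :
    ∑ w ∈ s, (α ^ 2) ^ G.dist w v ≤ G.alphaWeight α w₀ := by
  have hvw₀ : v ≠ w₀ := fun h => hv (h ▸ hw₀)
  have hsub : insert v (s.erase w₀) ⊆ univ.filter (· ≠ w₀) := by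
    intro u hu
    rcases mem_insert.mp hu with rfl | hu
    · simpa using hvw₀
    · simpa using ne_of_mem_erase hu
  calc ∑ w ∈ s, (α ^ 2) ^ G.dist w v
      = (α ^ 2) ^ G.dist w₀ v + ∑ w ∈ s.erase w₀, (α ^ 2) ^ G.dist w v :=
        (add_sum_erase s _ hw₀).symm
    _ ≤ α ^ G.dist w₀ v + ∑ w ∈ s.erase w₀, α ^ G.dist w₀ w := by
        simp only [← pow_mul]
        refine add_le_add (pow_le_pow_of_le_one hα0 hα1 (by omega)) (sum_le_sum fun w hw => ?_)
        exact pow_le_pow_of_le_one hα0 hα1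
          (hG.dist_le_two_mul_of_dist_le (hmin w (mem_of_mem_erase hw)))
    _ = ∑ u ∈ insert v (s.erase w₀), α ^ G.dist w₀ u := by
        rw [sum_insert fun h => hv (mem_of_mem_erase h)]
    _ ≤ G.alphaWeight α w₀ :=
        sum_le_sum_of_subset_of_nonneg hsub fun _ _ _ => pow_nonneg hα0 _

end SimpleGraph

theorem stmt_2_general {V : Type*} [Fintype V] [DecidableEq V]
    (G : SimpleGraph V) [DecidableRel G.Adj] (hconn : G.Connected)
    (c : ℕ) (α ε lam : ℝ) (hα0 : 0 < α) (hα1 : α < 1)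
    (hlam0 : 0 < lam) (hlam : lam ≤ α ^ 2)
    (U : Finset V)
    (hbd : (Finset.univ.filter fun u => u ∉ U ∧ ∃ u' ∈ U, G.Adj u' u).Nonempty)
    (hgood : ∀ w ∈ Finset.univ.filter fun u => u ∉ U ∧ ∃ u' ∈ U, G.Adj u' u,
      G.degree w ≤ c ∧ ∑ u ∈ Finset.univ.filter (· ≠ w), α ^ G.dist w u ≤ ε)
    (v : V) (hv : v ∈ U) :
    ∑ w ∈ Finset.univ.filter fun u => u ∉ U ∧ ∃ u' ∈ U, G.Adj u' u,
      lam ^ G.dist w v ≤ ε * lam / α ^ 2 := by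
  set B := Finset.univ.filter fun u => u ∉ U ∧ ∃ u' ∈ U, G.Adj u' u
  obtain ⟨w₀, hw₀, hmin⟩ := exists_min_image B (fun w => G.dist w v) hbd
  have hvB : v ∉ B := by simp [B, hv]
  have hφ : ∑ w ∈ B, (α ^ 2) ^ G.dist w v ≤ ε :=
    (hconn.sum_sq_pow_dist_le_alphaWeight hα0.le hα1.le hvB hw₀ hmin).trans (hgood w₀ hw₀).2
  calc ∑ w ∈ B, lam ^ G.dist w v
      ≤ ∑ w ∈ B, lam / α ^ 2 * (α ^ 2) ^ G.dist w v :=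
        sum_le_sum fun w hw => pow_le_div_mul_pow hlam0.le hlam (by positivity)
          (hconn.pos_dist_of_ne (by rintro rfl; exact hvB hw)).ne'
    _ = lam / α ^ 2 * ∑ w ∈ B, (α ^ 2) ^ G.dist w v := (mul_sum _ _ _).symm
    _ ≤ lam / α ^ 2 * ε := by gcongr
    _ = ε * lam / α ^ 2 := by ring

/-- If every vertex of the exterior boundary `∂⁺U` is `(c,α,ε)`-good, then for
every `v ∈ U` and every `0 < λ ≤ α²`, the block boundary weight satisfies
`ψ_λ(v) = ∑_{w ∈ ∂⁺U} λ^{d(w,v)} ≤ ε·λ/α²`. -/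
theorem stmt_2 {V : Type*} [Fintype V] [DecidableEq V]
    (G : SimpleGraph V) [DecidableRel G.Adj] (hconn : G.Connected)
    (c : ℕ) (α ε lam : ℝ) (hα0 : 0 < α) (hα1 : α < 1)
    (hlam0 : 0 < lam) (hlam : lam ≤ α ^ 2)
    (U : Finset V) (hU : U.Nonempty)
    (hbd : (Finset.univ.filter fun u => u ∉ U ∧ ∃ u' ∈ U, G.Adj u' u).Nonempty)
    (hgood : ∀ w ∈ Finset.univ.filter fun u => u ∉ U ∧ ∃ u' ∈ U, G.Adj u' u,
      G.degree w ≤ c ∧ ∑ u ∈ Finset.univ.filter (· ≠ w), α ^ G.dist w u ≤ ε)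
    (v : V) (hv : v ∈ U) :
    ∑ w ∈ Finset.univ.filter fun u => u ∉ U ∧ ∃ u' ∈ U, G.Adj u' u,
      lam ^ G.dist w v ≤ ε * lam / α ^ 2 :=
  stmt_2_general G hconn c α ε lam hα0 hα1 hlam0 hlam U hbd hgood v hv
end

section
/- Let Γ be a self-avoiding path in a connected graph B such that the tree excess of B (number of edges minus number of vertices plus one) is at most 1. Then for every vertex v of B and every D ≥ 1, the number of vertices u ∈ Γ with d(v,u) = D is at most 4. -/
/-!
Fix a breadth-first search tree of `B` rooted at `v`, i.e. a parent map sending every `u ≠ v` to a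
neighbour closer to `v`. Its `|V| - 1` edges are distinct, so `|E| ≤ |V|` leaves at most one edge
of `B` outside the tree. Among the edges of the tree, the only one joining a vertex `x` to a vertex
not farther from `v` than `x` is the parent edge of `x`. Now if `Γ` meets the sphere of radius `D`
at indices `a < b < c`, the function `i ↦ d(v, Γ i)` has a local maximum strictly between `a` and
`c`; the two path edges at that maximum go to distinct vertices not farther from `v`, so one of
them lies outside the tree. Five points of `Γ` on the sphere give two such edges in the disjoint
index ranges `[i₁, i₃]` and `[i₃, i₅]`, which is one too many.
-/

open Finset

theorem exists_local_max_between (f : ℕ → ℕ) {a b c : ℕ} (hab : a < b) (hbc : b < c)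
    (ha : f a ≤ f b) (hc : f c ≤ f b) :
    ∃ m, a ≤ m ∧ m + 2 ≤ c ∧ f m ≤ f (m + 1) ∧ f (m + 2) ≤ f (m + 1) := by
  obtain ⟨n, hn, hmax⟩ := (Ioo a c).exists_max_image f ⟨b, mem_Ioo.2 ⟨hab, hbc⟩⟩
  obtain ⟨han, hnc⟩ := mem_Ioo.1 hn
  have hb := hmax b (mem_Ioo.2 ⟨hab, hbc⟩)
  obtain ⟨m, rfl⟩ : ∃ m, n = m + 1 := ⟨n - 1, by omega⟩
  refine ⟨m, by omega, by omega, ?_, ?_⟩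
  · rcases (show m = a ∨ a < m by omega) with rfl | ham
    · omega
    · exact hmax m (mem_Ioo.2 ⟨ham, by omega⟩)
  · rcases (show m + 2 = c ∨ m + 2 < c by omega) with hmc | hmc
    · rw [hmc]; omega
    · exact hmax (m + 2) (mem_Ioo.2 ⟨by omega, hmc⟩)

namespace SimpleGraph

variable {V : Type*} {G : SimpleGraph V} {v : V} {pa : V → V}

def IsBFSParent (G : SimpleGraph V) (v : V) (pa : V → V) : Prop :=
  ∀ u, u ≠ v → G.Adj u (pa u) ∧ G.dist v (pa u) < G.dist v u

theorem Connected.exists_isBFSParent (hG : G.Connected) (v : V) : ∃ pa, G.IsBFSParent v pa := by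
  have h : ∀ u, ∃ w, u ≠ v → G.Adj u w ∧ G.dist v w < G.dist v u := by
    intro u
    by_cases hu : u = v
    · exact ⟨u, fun h => absurd hu h⟩
    obtain ⟨q, hq⟩ := hG.exists_walk_length_eq_dist u v
    have hq_not_nil : ¬q.Nil := Walk.not_nil_of_ne hu
    refine ⟨q.snd, fun _ => ⟨q.adj_snd hq_not_nil, ?_⟩⟩
    calc G.dist v q.snd = G.dist q.snd v := dist_comm
      _ ≤ q.tail.length := dist_le q.tail
      _ < q.length := by rw [← Walk.length_tail_add_one hq_not_nil]; omega
      _ = G.dist v u := by rw [hq, dist_comm]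
  choose pa hpa using h
  exact ⟨pa, hpa⟩

section BFSTree

variable [Fintype V] [DecidableEq V]

def bfsTreeEdges (v : V) (pa : V → V) : Finset (Sym2 V) :=
  (univ.erase v).image fun u => s(u, pa u)

namespace IsBFSParent

theorem eq_of_mem_bfsTreeEdges (hpa : G.IsBFSParent v pa) {x y : V}
    (he : s(x, y) ∈ bfsTreeEdges v pa) (hxy : G.dist v y ≤ G.dist v x) : y = pa x := by
  obtain ⟨u, hu, hsu⟩ := mem_image.1 he
  have hlt := (hpa u (ne_of_mem_erase hu)).2
  rcases Sym2.eq_iff.1 hsu with ⟨rfl, rfl⟩ | ⟨rfl, rfl⟩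
  · rfl
  · omega

theorem card_bfsTreeEdges (hpa : G.IsBFSParent v pa) :
    #(bfsTreeEdges v pa) = Fintype.card V - 1 := by
  rw [bfsTreeEdges, card_image_of_injOn, card_erase_of_mem (mem_univ v), card_univ]
  intro u hu u' hu' h
  have hlt := (hpa u (ne_of_mem_erase hu)).2
  have hlt' := (hpa u' (ne_of_mem_erase hu')).2
  rcases Sym2.eq_iff.1 h with ⟨h, -⟩ | ⟨h₁, h₂⟩
  · exact h
  · rw [h₂] at hlt
    rw [← h₁] at hlt'
    omega

variable [DecidableRel G.Adj]

theorem bfsTreeEdges_subset (hpa : G.IsBFSParent v pa) : bfsTreeEdges v pa ⊆ G.edgeFinset := by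
  intro e he
  obtain ⟨u, hu, rfl⟩ := mem_image.1 he
  exact mem_edgeFinset.2 (hpa u (ne_of_mem_erase hu)).1

theorem card_edgeFinset_sdiff_le_one (hpa : G.IsBFSParent v pa)
    (hG : #G.edgeFinset ≤ Fintype.card V) : #(G.edgeFinset \ bfsTreeEdges v pa) ≤ 1 := by
  rw [card_sdiff_of_subset hpa.bfsTreeEdges_subset, hpa.card_bfsTreeEdges]
  omega

end IsBFSParent

end BFSTree

namespace Walk

variable {a b : V} {p : G.Walk a b}

theorem IsPath.eq_of_edge_getVert_eq (hp : p.IsPath) {i j : ℕ} (hi : i < p.length)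
    (hj : j < p.length)
    (h : s(p.getVert i, p.getVert (i + 1)) = s(p.getVert j, p.getVert (j + 1))) : i = j := by
  have inj {k l : ℕ} (hk : k ≤ p.length) (hl : l ≤ p.length) (h : p.getVert k = p.getVert l) :
      k = l := hp.getVert_injOn hk hl h
  rcases Sym2.eq_iff.1 h with ⟨h, -⟩ | ⟨h₁, h₂⟩
  · exact inj hi.le hj.le h
  · have := inj hi.le (by omega) h₁
    have := inj (by omega) hj.le h₂
    omega

theorem card_filter_support_toFinset_le [DecidableEq V] (p : G.Walk a b) (P : V → Prop)
    [DecidablePred P] :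
    #(p.support.toFinset.filter P) ≤
      #((range (p.length + 1)).filter fun i => P (p.getVert i)) := by
  refine (card_le_card (t := ((range (p.length + 1)).filter fun i => P (p.getVert i)).image
    p.getVert) fun u hu => ?_).trans card_image_le
  obtain ⟨hu, hPu⟩ := mem_filter.1 hu
  obtain ⟨i, rfl, hi⟩ := mem_support_iff_exists_getVert.1 (List.mem_toFinset.1 hu)
  exact mem_image.2 ⟨i, mem_filter.2 ⟨mem_range.2 (by omega), hPu⟩, rfl⟩

end Walk

namespace IsBFSParent

variable [Fintype V] [DecidableEq V] {a b : V} {p : G.Walk a b}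

theorem exists_edge_notMem_bfsTreeEdges_of_peak (hpa : G.IsBFSParent v pa) (hp : p.IsPath)
    {m : ℕ} (hm : m + 2 ≤ p.length)
    (hl : G.dist v (p.getVert m) ≤ G.dist v (p.getVert (m + 1)))
    (hr : G.dist v (p.getVert (m + 2)) ≤ G.dist v (p.getVert (m + 1))) :
    ∃ j, m ≤ j ∧ j ≤ m + 1 ∧ s(p.getVert j, p.getVert (j + 1)) ∉ bfsTreeEdges v pa := by
  by_contra! h
  have hl' := hpa.eq_of_mem_bfsTreeEdges (Sym2.eq_swap ▸ h m le_rfl (by omega)) hl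
  have hr' := hpa.eq_of_mem_bfsTreeEdges (h (m + 1) (by omega) le_rfl) hr
  have := hp.getVert_injOn (show m ≤ p.length by omega) (show m + 2 ≤ p.length from hm)
    (hl'.trans hr'.symm)
  omega

theorem exists_edge_notMem_bfsTreeEdges (hpa : G.IsBFSParent v pa) (hp : p.IsPath)
    {i j k : ℕ} (hij : i < j) (hjk : j < k) (hk : k ≤ p.length)
    (hi : G.dist v (p.getVert i) ≤ G.dist v (p.getVert j))
    (hk' : G.dist v (p.getVert k) ≤ G.dist v (p.getVert j)) :
    ∃ e, i ≤ e ∧ e < k ∧ s(p.getVert e, p.getVert (e + 1)) ∉ bfsTreeEdges v pa := by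
  obtain ⟨m, him, hmk, hl, hr⟩ :=
    exists_local_max_between (fun n => G.dist v (p.getVert n)) hij hjk hi hk'
  obtain ⟨e, hme, hem, he⟩ := hpa.exists_edge_notMem_bfsTreeEdges_of_peak hp (by omega) hl hr
  exact ⟨e, by omega, by omega, he⟩

variable [DecidableRel G.Adj]

theorem eq_of_edge_notMem_bfsTreeEdges (hpa : G.IsBFSParent v pa)
    (hG : #G.edgeFinset ≤ Fintype.card V) (hp : p.IsPath) {j k : ℕ} (hj : j < p.length)
    (hk : k < p.length) (hjT : s(p.getVert j, p.getVert (j + 1)) ∉ bfsTreeEdges v pa)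
    (hkT : s(p.getVert k, p.getVert (k + 1)) ∉ bfsTreeEdges v pa) : j = k := by
  have mem {e : ℕ} (he : e < p.length)
      (hT : s(p.getVert e, p.getVert (e + 1)) ∉ bfsTreeEdges v pa) :
      s(p.getVert e, p.getVert (e + 1)) ∈ G.edgeFinset \ bfsTreeEdges v pa :=
    mem_sdiff.2 ⟨mem_edgeFinset.2 (p.adj_getVert_succ he), hT⟩
  exact hp.eq_of_edge_getVert_eq hj hk <|
    card_le_one.1 (hpa.card_edgeFinset_sdiff_le_one hG) _ (mem hj hjT) _ (mem hk hkT)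

end IsBFSParent

end SimpleGraph

open SimpleGraph in
theorem stmt_5_general {V : Type*} [Fintype V] [DecidableEq V]
    (B : SimpleGraph V) [DecidableRel B.Adj] (hconn : B.Connected)
    (hexcess : B.edgeFinset.card ≤ Fintype.card V)
    {a b : V} (p : B.Walk a b) (hp : p.IsPath) (v : V) (D : ℕ) :
    (p.support.toFinset.filter fun u => B.dist v u = D).card ≤ 4 := by
  obtain ⟨pa, hpa⟩ := hconn.exists_isBFSParent v
  by_contra! hcard
  obtain ⟨s, hs, hs5⟩ :=
    exists_subset_card_eq (hcard.trans_le (p.card_filter_support_toFinset_le _))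
  set i := s.orderEmbOfFin hs5
  have hi (n : Fin 5) : i n ≤ p.length ∧ B.dist v (p.getVert (i n)) = D := by
    simpa [Nat.lt_succ_iff] using hs (s.orderEmbOfFin_mem hs5 n)
  have hdist (m n : Fin 5) : B.dist v (p.getVert (i m)) ≤ B.dist v (p.getVert (i n)) :=
    ((hi m).2.trans (hi n).2.symm).le
  have hlt {m n : Fin 5} (h : m < n) : i m < i n := i.strictMono h
  obtain ⟨e₁, -, he₁, he₁T⟩ := hpa.exists_edge_notMem_bfsTreeEdges hp
    (hlt (show (0 : Fin 5) < 1 by decide)) (hlt (show (1 : Fin 5) < 2 by decide)) (hi 2).1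
    (hdist 0 1) (hdist 2 1)
  obtain ⟨e₂, he₂, he₂', he₂T⟩ := hpa.exists_edge_notMem_bfsTreeEdges hp
    (hlt (show (2 : Fin 5) < 3 by decide)) (hlt (show (3 : Fin 5) < 4 by decide)) (hi 4).1
    (hdist 2 3) (hdist 4 3)
  have := (hi 4).1
  have := hpa.eq_of_edge_notMem_bfsTreeEdges hexcess hp (by omega) (by omega) he₁T he₂T
  omega

/-- In a connected graph with tree excess at most 1 (i.e. `|E| ≤ |V|`), any
self-avoiding path `Γ` has at most 4 vertices at distance exactly `D` from any
vertex `v`. -/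
theorem stmt_5 {V : Type*} [Fintype V] [DecidableEq V]
    (B : SimpleGraph V) [DecidableRel B.Adj] (hconn : B.Connected)
    (hexcess : B.edgeFinset.card ≤ Fintype.card V)
    {a b : V} (p : B.Walk a b) (hp : p.IsPath) (v : V) (D : ℕ) (hD : 1 ≤ D) :
    (p.support.toFinset.filter fun u => B.dist v u = D).card ≤ 4 :=
  stmt_5_general B hconn hexcess p hp v D
end

section
/- First moment bound for expansion in G(n,d/n): for every d ≥ 1 there exists h < ∞ and a > 0 such that with probability 1−o(1), every connected subset S of the Erdős–Rényi random graph G(n,d/n) with |S| ≥ a log n has at most (h−1)|S| vertices at distance exactly 1 from S. In particular the expected number of violating sets, bounded by ∑_{s=a log n}^{n} n·d^{s−1}·P[Bin(sn, d/n) > (h−1)s], tends to 0 provided h−1 > d(e−1)+1. -/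
/-!
If `S` is connected with more than `(e + 4) d |S|` external neighbours, pick `k = ⌈(e + 4) d s⌉` of
them, `s = |S|`. Sending every vertex of `S` but a root to its predecessor on a shortest path inside
`S`, and each of the `k` neighbours to some neighbour in `S`, gives `s - 1 + k` distinct edges of
the graph. There are at most `C(n, s) C(n, k) s^(s + k)` such edge sets, each present with
probability at most `(d / n)^(s - 1 + k)`. Since `C(n, s) s^s (d / n)^(s - 1) ≤ n e^(d s)` and
`C(n, k) (s d / n)^k ≤ (s d)^k / k! ≤ e^(e s d - k)`, the expected number of witnesses of size `s`
is at most `n e^(-3 s)`, and summing over `log n ≤ s ≤ n` leaves at most `1 / n`.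
-/

set_option linter.deprecated false

open MeasureTheory Filter Finset Real
open scoped ENNReal Nat

section ProductBernoulli

variable {ι : Type*} [Fintype ι] (q : NNReal) (hq : q ≤ 1)

theorem measure_pi_bernoulli_forall_eq_true (E : Finset ι) :
    Measure.pi (fun _ : ι => (PMF.bernoulli q hq).toMeasure) {ω | ∀ i ∈ E, ω i = true} =
      (q : ℝ≥0∞) ^ #E := by
  classical
  have hcyl : {ω : ι → Bool | ∀ i ∈ E, ω i = true} =
      Set.pi Set.univ fun i => if i ∈ E then {true} else Set.univ := by
    ext ω
    simp only [Set.mem_setOf_eq, Set.mem_pi, Set.mem_univ, forall_const]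
    refine forall_congr' fun i => ?_
    split_ifs with hi <;> simp [hi]
  have hfactor (i : ι) : (PMF.bernoulli q hq).toMeasure (if i ∈ E then {true} else Set.univ) =
      if i ∈ E then (q : ℝ≥0∞) else 1 := by
    split_ifs
    · simp [PMF.bernoulli_apply]
    · exact measure_univ
  rw [hcyl, Measure.pi_pi]
  simp only [hfactor, prod_ite_mem, univ_inter, prod_const]

theorem measure_pi_bernoulli_exists_forall_eq_true_le (𝓔 : Finset (Finset ι)) (m : ℕ) :
    Measure.pi (fun _ : ι => (PMF.bernoulli q hq).toMeasure)
        {ω | ∃ E ∈ 𝓔, m ≤ #E ∧ ∀ i ∈ E, ω i = true} ≤ #𝓔 * (q : ℝ≥0∞) ^ m := by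
  have hcover : {ω : ι → Bool | ∃ E ∈ 𝓔, m ≤ #E ∧ ∀ i ∈ E, ω i = true} ⊆
      ⋃ E ∈ 𝓔.filter (m ≤ #·), {ω | ∀ i ∈ E, ω i = true} := by
    rintro ω ⟨E, hE, hm, hω⟩
    exact Set.mem_biUnion (mem_filter.2 ⟨hE, hm⟩) hω
  calc _ ≤ ∑ E ∈ 𝓔.filter (m ≤ #·), (q : ℝ≥0∞) ^ #E := by
        refine (measure_mono hcover).trans ((measure_biUnion_finset_le _ _).trans_eq ?_)
        simp only [measure_pi_bernoulli_forall_eq_true]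
    _ ≤ ∑ _E ∈ 𝓔, (q : ℝ≥0∞) ^ m := by
        refine (sum_le_sum fun E hE => ?_).trans (sum_le_sum_of_subset (filter_subset _ _))
        exact pow_le_pow_right_of_le_one' (by exact_mod_cast hq) (mem_filter.1 hE).2
    _ = #𝓔 * (q : ℝ≥0∞) ^ m := by rw [sum_const, nsmul_eq_mul]

end ProductBernoulli

theorem pow_div_factorial_le_exp_sub {x : ℝ} (hx : 0 ≤ x) (k : ℕ) :
    x ^ k / k ! ≤ exp (exp 1 * x - k) := by
  calc x ^ k / k ! = exp (-k) * ((exp 1 * x) ^ k / k !) := by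
        rw [mul_pow, ← exp_nat_mul, mul_one, mul_div_assoc, ← mul_assoc, ← exp_add, neg_add_cancel,
          exp_zero, one_mul]
    _ ≤ exp (-k) * exp (exp 1 * x) := by
        gcongr
        exact pow_div_factorial_le_exp _ (by positivity) k
    _ = exp (exp 1 * x - k) := by rw [← exp_add]; ring_nf

theorem choose_mul_div_pow_le_pow_div_factorial {x : ℝ} (hx : 0 ≤ x) (n k : ℕ) :
    (n.choose k : ℝ) * (x / n) ^ k ≤ x ^ k / k ! := by
  have hnx : (n : ℝ) * (x / n) ≤ x := by
    rcases n.eq_zero_or_pos with rfl | hn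
    · simpa using hx
    · rw [mul_div_cancel₀ _ (by positivity)]
  calc (n.choose k : ℝ) * (x / n) ^ k ≤ (n : ℝ) ^ k / k ! * (x / n) ^ k := by
        gcongr; exact Nat.choose_le_pow_div k n
    _ = ((n : ℝ) * (x / n)) ^ k / k ! := by ring
    _ ≤ x ^ k / k ! := by gcongr

theorem choose_mul_pow_mul_div_pow_le {d : ℝ} (hd : 1 ≤ d) (n : ℕ) {s : ℕ} (hs : 1 ≤ s) :
    (n.choose s : ℝ) * s ^ s * (d / n) ^ (s - 1) ≤ n * exp (d * s) := by
  rcases n.eq_zero_or_pos with rfl | hn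
  · simp [Nat.choose_eq_zero_of_lt hs]
  have hd_exp : d ≤ exp (d - 1) := by linarith [add_one_le_exp (d - 1)]
  calc (n.choose s : ℝ) * s ^ s * (d / n) ^ (s - 1)
      ≤ (n : ℝ) ^ s / s ! * s ^ s * (d / n) ^ (s - 1) := by
        gcongr; exact Nat.choose_le_pow_div s n
    _ = n * ((s : ℝ) ^ s / s !) * d ^ (s - 1) := by
        obtain ⟨t, rfl⟩ := exists_add_of_le hs
        rw [add_tsub_cancel_left, div_pow, pow_add]
        field_simp
    _ ≤ n * exp s * d ^ s := by
        gcongr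
        · exact pow_div_factorial_le_exp _ (by positivity) s
        · exact Nat.sub_le s 1
    _ ≤ n * exp s * exp (d - 1) ^ s := by gcongr
    _ = n * exp (d * s) := by rw [mul_assoc, ← exp_nat_mul, ← exp_add]; ring_nf

-- The factor `e + 4` lets the tail `e^(e s d - k)` absorb the tree count `e^(d s)` with `e^(-3 s)`
-- to spare.
theorem choose_mul_choose_mul_pow_mul_div_pow_le {d : ℝ} (hd : 1 ≤ d) (n : ℕ) {s k : ℕ}
    (hs : 1 ≤ s) (hk : (exp 1 + 4) * d * s ≤ k) :
    (n.choose s : ℝ) * n.choose k * s ^ (s + k) * (d / n) ^ (s - 1 + k) ≤ n * exp (-3 * s) := by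
  have hsd : 0 ≤ (s : ℝ) * d := by positivity
  calc (n.choose s : ℝ) * n.choose k * s ^ (s + k) * (d / n) ^ (s - 1 + k)
      = ((n.choose s : ℝ) * s ^ s * (d / n) ^ (s - 1)) * (n.choose k * (s * d / n) ^ k) := by
        ring
    _ ≤ (n * exp (d * s)) * exp (exp 1 * (s * d) - k) := by
        refine mul_le_mul (choose_mul_pow_mul_div_pow_le hd n hs) ?_ (by positivity) (by positivity)
        exact (choose_mul_div_pow_le_pow_div_factorial hsd n k).trans
          (pow_div_factorial_le_exp_sub hsd k)
    _ ≤ n * exp (-3 * s) := by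
        rw [mul_assoc, ← exp_add]
        gcongr
        have : (1 : ℝ) ≤ s := by exact_mod_cast hs
        nlinarith

theorem Finset.card_erase_le_card_subtype_image {α β : Type*} [DecidableEq α] [DecidableEq β]
    {T : Finset α} {r : α} {f : α → β} {P : β → Prop} [DecidablePred P]
    (hinj : Set.InjOn f (T.erase r : Set α)) (hP : ∀ a ∈ T.erase r, P (f a)) :
    #(T.erase r) ≤ #((T.image f).subtype P) := by
  rw [← card_image_of_injOn hinj, card_subtype]
  refine card_le_card fun b hb => ?_
  obtain ⟨a, ha, rfl⟩ := mem_image.1 hb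
  exact mem_filter.2 ⟨mem_image_of_mem f (mem_of_mem_erase ha), hP a ha⟩

namespace SimpleGraph

variable {V : Type*} {G : SimpleGraph V}

theorem Connected.exists_adj_dist_lt (hG : G.Connected) {u v : V} (huv : u ≠ v) :
    ∃ w, G.Adj v w ∧ G.dist u w < G.dist u v := by
  obtain ⟨p, hp⟩ := hG.exists_walk_length_eq_dist v u
  obtain ⟨w, hvw, q, rfl⟩ := Walk.exists_eq_cons_of_ne huv.symm p
  refine ⟨w, hvw, ?_⟩
  have := G.dist_le q
  rw [Walk.length_cons, dist_comm] at hp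
  rw [dist_comm]
  omega

variable [DecidableEq V]

-- Inside `S` the parent decreases the distance to `r`, which makes the edges `s(v, p v)` distinct.
theorem exists_parent {S W : Finset V} {r : V} (hr : r ∈ S)
    (hS : (G.induce (S : Set V)).Connected) (hW : ∀ w ∈ W, w ∉ S ∧ ∃ u ∈ S, G.Adj u w) :
    ∃ p : V → V, (∀ v ∉ (S ∪ W).erase r, p v = v) ∧
      (∀ v ∈ (S ∪ W).erase r, p v ∈ S ∧ G.Adj v (p v)) ∧
      Set.InjOn (fun v => s(v, p v)) ((S ∪ W).erase r : Set V) := by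
  let D : V → ℕ := fun v =>
    if hv : v ∈ S then (G.induce (S : Set V)).dist ⟨r, hr⟩ ⟨v, hv⟩ else 0
  have hparent : ∀ v ∈ (S ∪ W).erase r, ∃ u ∈ S, G.Adj v u ∧ (v ∈ S → D u < D v) := by
    intro v hv
    obtain ⟨hvr, hv⟩ := mem_erase.1 hv
    by_cases hvS : v ∈ S
    · obtain ⟨⟨u, huS⟩, hvu, hlt⟩ := hS.exists_adj_dist_lt (u := ⟨r, hr⟩) (v := ⟨v, hvS⟩)
        fun h => hvr (congrArg Subtype.val h).symm
      refine ⟨u, huS, hvu, fun _ => ?_⟩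
      simpa only [D, dif_pos (mem_coe.1 huS), dif_pos hvS] using hlt
    · obtain ⟨-, u, huS, huv⟩ := hW v ((mem_union.1 hv).resolve_left hvS)
      exact ⟨u, huS, huv.symm, fun h => absurd h hvS⟩
  choose! p hpS hpadj hpD using hparent
  have hinj : Set.InjOn (fun v => s(v, p v)) ((S ∪ W).erase r : Set V) := by
    intro v hv v' hv' h
    rcases Sym2.eq_iff.1 h with ⟨hvv', -⟩ | ⟨hv_eq, hv'_eq⟩
    · exact hvv'
    · have h1 := hpD v hv (hv_eq ▸ hpS v' hv')
      have h2 := hpD v' hv' (hv'_eq ▸ hpS v hv)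
      rw [hv'_eq] at h1
      rw [← hv_eq] at h2
      omega
  have hpiece : Set.EqOn p (((S ∪ W).erase r).piecewise p id) ((S ∪ W).erase r : Set V) :=
    fun v hv => (piecewise_eq_of_mem _ _ _ hv).symm
  refine ⟨((S ∪ W).erase r).piecewise p id, fun v hv => piecewise_eq_of_notMem _ _ _ hv,
    fun v hv => ?_, hinj.congr fun v hv => by simp only [hpiece hv]⟩
  rw [← hpiece hv]
  exact ⟨hpS v hv, hpadj v hv⟩

end SimpleGraph

variable {V : Type*} [Fintype V] [DecidableEq V]

-- The root of `S` is its own parent, whence the diagonal is dropped; `p` is pinned to the identity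
-- outside `S ∪ W` so that each parent map is counted once.
def parentEdgeSets (s k : ℕ) : Finset (Finset {e : Sym2 V // ¬ e.IsDiag}) :=
  (powersetCard s univ ×ˢ powersetCard k univ).biUnion fun SW =>
    (Fintype.piFinset fun v => if v ∈ SW.1 ∪ SW.2 then SW.1 else {v}).image fun p =>
      ((SW.1 ∪ SW.2).image fun v => s(v, p v)).subtype fun e => ¬ e.IsDiag

theorem card_parentEdgeSets_le {s : ℕ} (hs : 1 ≤ s) (k : ℕ) :
    #(parentEdgeSets (V := V) s k) ≤
      (Fintype.card V).choose s * (Fintype.card V).choose k * s ^ (s + k) := by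
  have hparents : ∀ SW ∈ powersetCard s (univ : Finset V) ×ˢ powersetCard k univ,
      #(Fintype.piFinset fun v => if v ∈ SW.1 ∪ SW.2 then SW.1 else {v}) ≤ s ^ (s + k) := by
    rintro ⟨S, W⟩ hSW
    obtain ⟨hS, hW⟩ := mem_product.1 hSW
    rw [Fintype.card_piFinset]
    simp only [apply_ite card, card_singleton, prod_ite_mem, univ_inter, prod_const,
      (mem_powersetCard.1 hS).2]
    refine pow_le_pow_right₀ hs ((card_union_le S W).trans ?_)
    rw [(mem_powersetCard.1 hS).2, (mem_powersetCard.1 hW).2]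
  calc #(parentEdgeSets (V := V) s k)
      ≤ ∑ SW ∈ powersetCard s (univ : Finset V) ×ˢ powersetCard k univ, s ^ (s + k) :=
        card_biUnion_le.trans (sum_le_sum fun SW hSW => card_image_le.trans (hparents SW hSW))
    _ = _ := by simp [card_univ]

theorem SimpleGraph.exists_mem_parentEdgeSets (G : SimpleGraph V) {S W : Finset V}
    (hS : (G.induce (S : Set V)).Connected) (hW : ∀ w ∈ W, w ∉ S ∧ ∃ u ∈ S, G.Adj u w) :
    ∃ E ∈ parentEdgeSets #S #W, #S - 1 + #W ≤ #E ∧ ∀ e ∈ E, e.1 ∈ G.edgeSet := by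
  obtain ⟨⟨r, hr⟩⟩ := hS.nonempty
  obtain ⟨p, hp_id, hp, hinj⟩ := G.exists_parent hr hS hW
  set T := S ∪ W
  have hrT : r ∈ T := mem_union_left W hr
  have hmem : p ∈ Fintype.piFinset fun v => if v ∈ T then S else {v} := by
    refine Fintype.mem_piFinset.2 fun v => ?_
    by_cases hv : v ∈ T.erase r
    · rw [if_pos (mem_of_mem_erase hv)]
      exact (hp v hv).1
    · rw [hp_id v hv]
      split_ifs with hvT
      · rwa [of_not_not fun h => hv (mem_erase.2 ⟨h, hvT⟩)]
      · exact mem_singleton_self v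
  refine ⟨_, mem_biUnion.2 ⟨(S, W), mem_product.2 ⟨mem_powersetCard.2 ⟨subset_univ S, rfl⟩,
    mem_powersetCard.2 ⟨subset_univ W, rfl⟩⟩, mem_image_of_mem _ hmem⟩, ?_, ?_⟩
  · have hcard : #S - 1 + #W = #(T.erase r) := by
      rw [card_erase_of_mem hrT,
        card_union_of_disjoint (disjoint_right.2 fun w hw => (hW w hw).1)]
      have : 1 ≤ #S := card_pos.2 ⟨r, hr⟩
      omega
    exact hcard.trans_le (card_erase_le_card_subtype_image hinj fun v hv =>
      Sym2.mk_isDiag_iff.not.2 (hp v hv).2.ne)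
  · intro e he
    obtain ⟨v, hvT, hv⟩ := mem_image.1 (mem_subtype.1 he)
    by_cases hvr : v = r
    · subst hvr
      exact absurd (hv ▸ Sym2.mk_isDiag_iff.2 (hp_id v (notMem_erase v T)).symm) e.2
    · rw [← hv]
      exact (hp v (mem_erase.2 ⟨hvr, hvT⟩)).2

theorem sum_Icc_ceil_log_mul_exp_neg_le {n : ℕ} (hn : 2 ≤ n) :
    ∑ s ∈ Icc ⌈log n⌉₊ n, (n : ℝ) * exp (-3 * s) ≤ (n : ℝ)⁻¹ := by
  have hn0 : (0 : ℝ) < n := by positivity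
  have hlog : 0 < log n := log_pos (by exact_mod_cast hn)
  have hterm : ∀ s ∈ Icc ⌈log n⌉₊ n, (n : ℝ) * exp (-3 * s) ≤ n * (n : ℝ)⁻¹ ^ 3 := by
    intro s hs
    have hs : log n ≤ s := Nat.ceil_le.1 (mem_Icc.1 hs).1
    calc (n : ℝ) * exp (-3 * s) ≤ n * exp (-3 * log n) := by gcongr ?_ * exp ?_; linarith
      _ = n * (n : ℝ)⁻¹ ^ 3 := by
        rw [← exp_log (by positivity : (0 : ℝ) < (n : ℝ)⁻¹ ^ 3), log_pow, log_inv]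
        ring_nf
  have hcard : #(Icc ⌈log n⌉₊ n) ≤ n := by
    have : 1 ≤ ⌈log n⌉₊ := Nat.one_le_iff_ne_zero.2 (Nat.ceil_pos.2 hlog).ne'
    rw [Nat.card_Icc]; omega
  calc ∑ s ∈ Icc ⌈log n⌉₊ n, (n : ℝ) * exp (-3 * s)
      ≤ #(Icc ⌈log n⌉₊ n) * (n * (n : ℝ)⁻¹ ^ 3) := by
        simpa using sum_le_card_nsmul _ _ _ hterm
    _ ≤ n * (n * (n : ℝ)⁻¹ ^ 3) := by gcongr
    _ = (n : ℝ)⁻¹ := by field_simp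

theorem measure_pi_bernoulli_exists_mem_parentEdgeSets_le {d : ℝ} (hd : 1 ≤ d) {n s k : ℕ}
    (hs : 1 ≤ s) (hk : (exp 1 + 4) * d * s ≤ k) {q : NNReal} (hq : q ≤ 1) (hqd : (q : ℝ) ≤ d / n) :
    Measure.pi (fun _ : {e : Sym2 (Fin n) // ¬ e.IsDiag} => (PMF.bernoulli q hq).toMeasure)
        {ω | ∃ E ∈ parentEdgeSets s k, s - 1 + k ≤ #E ∧ ∀ e ∈ E, ω e = true} ≤
      ENNReal.ofReal (n * exp (-3 * s)) := by
  have hcount := card_parentEdgeSets_le (V := Fin n) hs k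
  rw [Fintype.card_fin] at hcount
  calc _ ≤ #(parentEdgeSets s k) * (q : ℝ≥0∞) ^ (s - 1 + k) :=
        measure_pi_bernoulli_exists_forall_eq_true_le q hq _ _
    _ ≤ ENNReal.ofReal (n.choose s * n.choose k * s ^ (s + k) * (d / n) ^ (s - 1 + k)) := by
        rw [ENNReal.ofReal_mul (by positivity), ENNReal.ofReal_pow (by positivity),
          ← ENNReal.ofReal_coe_nnreal]
        gcongr
        rw [← ENNReal.ofReal_natCast]
        exact_mod_cast hcount
    _ ≤ ENNReal.ofReal (n * exp (-3 * s)) :=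
        ENNReal.ofReal_le_ofReal (choose_mul_choose_mul_pow_mul_div_pow_le hd n hs hk)

-- Reducible, so that decidability instances agree with those of `fromEdgeSet`.
abbrev SimpleGraph.fromEdgeIndicator {V : Type*} (ω : {e : Sym2 V // ¬ e.IsDiag} → Bool) :
    SimpleGraph V :=
  SimpleGraph.fromEdgeSet {e | ∃ hd : ¬ e.IsDiag, ω ⟨e, hd⟩ = true}

theorem SimpleGraph.mem_edgeSet_fromEdgeIndicator {V : Type*}
    {ω : {e : Sym2 V // ¬ e.IsDiag} → Bool} {e : {e : Sym2 V // ¬ e.IsDiag}} :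
    e.1 ∈ (fromEdgeIndicator ω).edgeSet ↔ ω e = true := by
  simp [edgeSet_fromEdgeSet, e.2]

open scoped Classical in
theorem measure_exists_connected_many_external_neighbors_le {d : ℝ} (hd : 1 ≤ d) {n : ℕ}
    (hn : 2 ≤ n) {q : NNReal} (hq : q ≤ 1) (hqd : (q : ℝ) ≤ d / n) :
    Measure.pi (fun _ : {e : Sym2 (Fin n) // ¬ e.IsDiag} => (PMF.bernoulli q hq).toMeasure)
      {ω | ∃ S : Finset (Fin n),
        ((SimpleGraph.fromEdgeIndicator ω).induce (S : Set (Fin n))).Connected ∧ log n ≤ #S ∧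
        (exp 1 + 4) * d * #S < #{v | v ∉ S ∧ ∃ u ∈ S, (SimpleGraph.fromEdgeIndicator ω).Adj u v}} ≤
      ENNReal.ofReal (n : ℝ)⁻¹ := by
  set μ := Measure.pi (fun _ : {e : Sym2 (Fin n) // ¬ e.IsDiag} => (PMF.bernoulli q hq).toMeasure)
  let k (s : ℕ) : ℕ := ⌈(exp 1 + 4) * d * s⌉₊
  let witnessed (s : ℕ) : Set ({e : Sym2 (Fin n) // ¬ e.IsDiag} → Bool) :=
    {ω | ∃ E ∈ parentEdgeSets s (k s), s - 1 + k s ≤ #E ∧ ∀ e ∈ E, ω e = true}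
  have hs : ∀ s ∈ Icc ⌈log n⌉₊ n, 1 ≤ s := fun s hs =>
    (Nat.one_le_iff_ne_zero.2 (Nat.ceil_pos.2 (log_pos (by exact_mod_cast hn))).ne').trans
      (mem_Icc.1 hs).1
  calc _ ≤ μ (⋃ s ∈ Icc ⌈log n⌉₊ n, witnessed s) := measure_mono ?_
    _ ≤ ∑ s ∈ Icc ⌈log n⌉₊ n, μ (witnessed s) := measure_biUnion_finset_le _ _
    _ ≤ ∑ s ∈ Icc ⌈log n⌉₊ n, ENNReal.ofReal (n * exp (-3 * s)) := sum_le_sum fun s hsI =>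
        measure_pi_bernoulli_exists_mem_parentEdgeSets_le hd (hs s hsI) (Nat.le_ceil _) hq hqd
    _ = ENNReal.ofReal (∑ s ∈ Icc ⌈log n⌉₊ n, n * exp (-3 * s)) :=
        (ENNReal.ofReal_sum_of_nonneg fun _ _ => by positivity).symm
    _ ≤ ENNReal.ofReal (n : ℝ)⁻¹ := ENNReal.ofReal_le_ofReal (sum_Icc_ceil_log_mul_exp_neg_le hn)
  rintro ω ⟨S, hS, hlog, hext⟩
  obtain ⟨W, hWX, hW⟩ := exists_subset_card_eq (n := k #S) (Nat.ceil_le.2 hext.le)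
  obtain ⟨E, hE, hcard, hedges⟩ := (SimpleGraph.fromEdgeIndicator ω).exists_mem_parentEdgeSets hS
    fun w hw => (mem_filter.1 (hWX hw)).2
  refine Set.mem_biUnion (mem_Icc.2 ⟨Nat.ceil_le.2 hlog, card_le_univ S |>.trans_eq (by simp)⟩)
    ⟨E, hW ▸ hE, hW ▸ hcard, fun e he => SimpleGraph.mem_edgeSet_fromEdgeIndicator.1 (hedges e he)⟩

open MeasureTheory Filter in
open scoped Classical in
/-- First moment bound for expansion in `G(n, d/n)`: for every `d ≥ 1` there
exist `h < ∞` and `a > 0` such that with probability `1 − o(1)` every connected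
subset `S` of the Erdős–Rényi random graph `G(n, d/n)` with `|S| ≥ a log n` has
at most `(h−1)|S|` vertices at distance exactly 1 from `S` (i.e. external
neighbors).  The random graph is modelled by independent Bernoulli(`d/n`)
indicators, one for each potential edge. -/
theorem stmt_19 : ∀ d : ℝ, 1 ≤ d → ∃ h a : ℝ, 0 < h ∧ 0 < a ∧
    Tendsto (fun n : ℕ =>
      (Measure.pi (fun _ : {e : Sym2 (Fin n) // ¬ e.IsDiag} =>
          (PMF.bernoulli (min (Real.toNNReal (d / n)) 1)
            (min_le_right _ _)).toMeasure))
        {ω : {e : Sym2 (Fin n) // ¬ e.IsDiag} → Bool |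
          ∃ S : Finset (Fin n),
            ((SimpleGraph.fromEdgeSet
                {e : Sym2 (Fin n) | ∃ hd : ¬ e.IsDiag, ω ⟨e, hd⟩ = true}).induce
              (S : Set (Fin n))).Connected ∧
            a * Real.log n ≤ S.card ∧
            (h - 1) * S.card <
              ((Finset.univ.filter fun v : Fin n => v ∉ S ∧ ∃ u ∈ S,
                (SimpleGraph.fromEdgeSet
                  {e : Sym2 (Fin n) | ∃ hd : ¬ e.IsDiag, ω ⟨e, hd⟩ = true}).Adj u v).card : ℝ)})
      atTop (nhds 0) := by
  intro d hd
  refine ⟨1 + (exp 1 + 4) * d, 1, by positivity, one_pos, ?_⟩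
  simp only [one_mul, add_sub_cancel_left]
  refine tendsto_of_tendsto_of_tendsto_of_le_of_le' tendsto_const_nhds
    (by simpa using ENNReal.tendsto_ofReal tendsto_inv_atTop_nhds_zero_nat)
    (Eventually.of_forall fun _ => zero_le) ?_
  filter_upwards [eventually_ge_atTop 2] with n hn
  exact measure_exists_connected_many_external_neighbors_le hd hn (min_le_right _ _)
    ((NNReal.coe_le_coe.2 (min_le_left _ _)).trans (Real.coe_toNNReal _ (by positivity)).le)
end
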